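/- arXiv:1604.02378 — 9 statements merged into one kernel-verified Lean document; each statement's English description precedes it below -/
import Mathlib

section
/- Let G be a finite group, g, z ∈ G, and m an integer. If the set G_m(g,z) = {x ∈ G | x^m = (gx)^m = z} is nonempty, then g and z commute. -/
theorem stmt0 {G : Type*} [Group G] [Fintype G] (g z : G) (m : ℕ) (hm : 0 < m)
    (h : {x : G | x ^ m = z ∧ (g * x) ^ m = z}.Nonempty) : Commute g z := by
  obtain ⟨x, hx1, hx2⟩ := h
  have h1 : Commute x z := hx1 ▸ (Commute.self_pow x m)
  have h2 : Commute (g * x) z := hx2 ▸ (Commute.self_pow (g * x) m)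
  have : Commute (g * x * x⁻¹) z := h2.mul_left h1.inv_left
  simpa using this
end

section
/- For a finite group G, z ∈ G, and integer m, the function γ_m^z : C_G(z) → ℂ defined by γ_m^z(g) = |{x ∈ G | x^m = (gx)^m = z}| is a class function on the centralizer C_G(z), i.e., it is constant on conjugacy classes of C_G(z). -/
/-- γ_m^z(g) = |{x ∈ G | x^m = (gx)^m = z}| is a class function on C_G(z):
it is invariant under conjugation within the centralizer. -/
theorem stmt1 {G : Type*} [Group G] [Fintype G] (z : G) (m : ℕ) (hm : 0 < m)
    (g t : Subgroup.centralizer ({z} : Set G)) :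
    Nat.card {x : G | x ^ m = z ∧ (((t * g * t⁻¹ : Subgroup.centralizer ({z} : Set G)) : G) * x) ^ m = z} =
      Nat.card {x : G | x ^ m = z ∧ ((g : G) * x) ^ m = z} := by
  symm
  apply Nat.card_congr
  have hz : (t : G) * z * (t : G)⁻¹ = z := by
    have h := (Set.mem_centralizer_iff.mp t.2) z rfl
    rw [← h]; group
  have h := (Set.mem_centralizer_iff.mp t.2) z rfl
  have hz' : (t : G)⁻¹ * z * (t : G) = z := by
    rw [mul_assoc, h, ← mul_assoc, inv_mul_cancel, one_mul]
  have key : ∀ a : G, ((t : G) * a * (t : G)⁻¹) ^ m = (t : G) * a ^ m * (t : G)⁻¹ := by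
    intro a; rw [conj_pow]
  have key' : ∀ a : G, ((t : G)⁻¹ * a * (t : G)) ^ m = (t : G)⁻¹ * a ^ m * (t : G) := by
    intro a
    have := conj_pow (a := (t : G)⁻¹) (b := a) (i := m)
    simpa using this
  refine ⟨fun x => ⟨(t : G) * x * (t : G)⁻¹, ?_, ?_⟩,
          fun y => ⟨(t : G)⁻¹ * y * (t : G), ?_, ?_⟩, ?_, ?_⟩
  · rw [key, x.2.1, hz]
  · obtain ⟨x, hx1, hx2⟩ := x
    show (((t : G) * g * (t : G)⁻¹) * ((t : G) * x * (t : G)⁻¹)) ^ m = z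
    have : ((t : G) * g * (t : G)⁻¹) * ((t : G) * x * (t : G)⁻¹)
        = (t : G) * ((g : G) * x) * (t : G)⁻¹ := by group
    rw [this, key, hx2, hz]
  · rw [key', y.2.1, hz']
  · obtain ⟨y, hy1, hy2⟩ := y
    push_cast at hy2
    show ((g : G) * ((t : G)⁻¹ * y * (t : G))) ^ m = z
    have : (g : G) * ((t : G)⁻¹ * y * (t : G))
        = (t : G)⁻¹ * (((t : G) * g * (t : G)⁻¹) * y) * (t : G) := by group
    rw [this, key', hy2, hz']
  · intro x; ext; show (t : G)⁻¹ * ((t : G) * x * (t : G)⁻¹) * (t : G) = x; group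
  · intro y; ext; show (t : G) * ((t : G)⁻¹ * y * (t : G)) * (t : G)⁻¹ = y; group
end

section
/- Let G be a finite group, g and z commuting elements, and m an integer. Then |{x ∈ G | x^m = (gx)^m = z}| equals the sum over pairs of conjugacy class representatives a, b of C_G(z) with a^m = b^m = z of the class multiplication coefficient counting pairs (x,y) with x ∈ a^{C_G(z)}, y ∈ (b^{-1})^{C_G(z)}, and xy = g. -/
open scoped Classical

/-- |G_m(g,z)| equals the sum, over pairs of conjugacy class representatives a, b of
C_G(z) with a^m = b^m = z, of the class multiplication coefficient counting pairs
(x,y) with x ∈ a^C, y ∈ (b⁻¹)^C and xy = g. -/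
theorem stmt4 {G : Type*} [Group G] [Fintype G] (g z : G) (hc : Commute g z)
    (m : ℕ) (hm : 0 < m)
    (hg : g ∈ Subgroup.centralizer ({z} : Set G))
    (hz : z ∈ Subgroup.centralizer ({z} : Set G))
    (R : Finset (Subgroup.centralizer ({z} : Set G)))
    (hR : ∀ x : Subgroup.centralizer ({z} : Set G), ∃! a, a ∈ R ∧ IsConj a x) :
    Nat.card {x : G | x ^ m = z ∧ (g * x) ^ m = z} =
      ∑ a ∈ R.filter (fun a => a ^ m = ⟨z, hz⟩),
        ∑ b ∈ R.filter (fun b => b ^ m = ⟨z, hz⟩),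
          Nat.card {p : Subgroup.centralizer ({z} : Set G) × Subgroup.centralizer ({z} : Set G) |
            IsConj a p.1 ∧ IsConj b⁻¹ p.2 ∧ p.1 * p.2 = ⟨g, hg⟩} := by
  classical
  -- ⟨z, hz⟩ is central in the centralizer
  have hcent : ∀ c : Subgroup.centralizer ({z} : Set G),
      c * (⟨z, hz⟩ : Subgroup.centralizer ({z} : Set G)) = ⟨z, hz⟩ * c := by
    intro c
    ext
    exact (c.2 z (Set.mem_singleton z)).symm
  -- conjugation invariance of (· ^ m = ⟨z, hz⟩)
  have hconj : ∀ {p q : Subgroup.centralizer ({z} : Set G)}, IsConj p q →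
      p ^ m = ⟨z, hz⟩ → q ^ m = ⟨z, hz⟩ := by
    intro p q hpq hp
    obtain ⟨c, hcq⟩ := isConj_iff.mp hpq
    have h : q ^ m = c * p ^ m * c⁻¹ := by
      rw [← hcq, conj_pow]
    rw [h, hp, hcent c, mul_assoc, mul_inv_cancel, mul_one]
  have hinv : ∀ {x y : Subgroup.centralizer ({z} : Set G)}, IsConj x y → IsConj x⁻¹ y⁻¹ := by
    intro x y hxy
    obtain ⟨c, hc'⟩ := isConj_iff.mp hxy
    exact isConj_iff.mpr ⟨c, by rw [← hc']; group⟩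
  have memC : ∀ {x : G}, x ^ m = z → x ∈ Subgroup.centralizer ({z} : Set G) := by
    intro x hx
    rw [Subgroup.mem_centralizer_iff]
    intro y hy
    rw [Set.mem_singleton_iff] at hy
    subst hy
    rw [← hx]
    exact (Commute.pow_self x m).eq
  -- Step 1: bijection
  have e : {x : G | x ^ m = z ∧ (g * x) ^ m = z} ≃
      {p : Subgroup.centralizer ({z} : Set G) × Subgroup.centralizer ({z} : Set G) |
        p.1 ^ m = ⟨z, hz⟩ ∧ p.2⁻¹ ^ m = ⟨z, hz⟩ ∧ p.1 * p.2 = ⟨g, hg⟩} :=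
    { toFun := fun x => ⟨(⟨g * x.1, mul_mem hg (memC x.2.1)⟩, ⟨(x.1)⁻¹, inv_mem (memC x.2.1)⟩), by
        refine ⟨?_, ?_, ?_⟩
        · ext; simpa using x.2.2
        · ext; simpa using x.2.1
        · ext; simp⟩
      invFun := fun p => ⟨(((p.1.2)⁻¹ : Subgroup.centralizer ({z} : Set G)) : G), by
        obtain ⟨h1, h2, h3⟩ := p.2
        constructor
        · have := congrArg (Subtype.val) h2
          simpa using this
        · have hp1 : p.1.1 = (⟨g, hg⟩ : Subgroup.centralizer ({z} : Set G)) * (p.1.2)⁻¹ :=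
            eq_mul_inv_of_mul_eq h3
          have := congrArg (Subtype.val) h1
          rw [hp1] at this
          simpa using this⟩
      left_inv := fun x => by
        ext
        simp
      right_inv := fun p => by
        obtain ⟨h1, h2, h3⟩ := p.2
        ext
        · rw [eq_mul_inv_of_mul_eq h3]; simp
        · simp }
  rw [Nat.card_congr e]
  -- Step 2: counting
  rw [Nat.card_eq_card_toFinset]
  have htf : {p : Subgroup.centralizer ({z} : Set G) × Subgroup.centralizer ({z} : Set G) |
        p.1 ^ m = ⟨z, hz⟩ ∧ p.2⁻¹ ^ m = ⟨z, hz⟩ ∧ p.1 * p.2 = ⟨g, hg⟩}.toFinset =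
      Finset.univ.filter
        (fun p : Subgroup.centralizer ({z} : Set G) × Subgroup.centralizer ({z} : Set G) =>
          p.1 ^ m = ⟨z, hz⟩ ∧ p.2⁻¹ ^ m = ⟨z, hz⟩ ∧ p.1 * p.2 = ⟨g, hg⟩) := by
    ext p; simp
  rw [htf]
  have hmap : ∀ p ∈ Finset.univ.filter
      (fun p : Subgroup.centralizer ({z} : Set G) × Subgroup.centralizer ({z} : Set G) =>
        p.1 ^ m = ⟨z, hz⟩ ∧ p.2⁻¹ ^ m = ⟨z, hz⟩ ∧ p.1 * p.2 = ⟨g, hg⟩),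
      (((hR p.1).choose, (hR p.2⁻¹).choose) :
          Subgroup.centralizer ({z} : Set G) × Subgroup.centralizer ({z} : Set G)) ∈
        (R.filter (fun a => a ^ m = ⟨z, hz⟩)) ×ˢ (R.filter (fun b => b ^ m = ⟨z, hz⟩)) := by
    intro p hp
    rw [Finset.mem_filter] at hp
    obtain ⟨-, h1, h2, h3⟩ := hp
    obtain ⟨ha1, ha2⟩ := (hR p.1).choose_spec.1
    obtain ⟨hb1, hb2⟩ := (hR p.2⁻¹).choose_spec.1
    rw [Finset.mem_product, Finset.mem_filter, Finset.mem_filter]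
    exact ⟨⟨ha1, hconj ha2.symm h1⟩, ⟨hb1, hconj hb2.symm h2⟩⟩
  rw [Finset.card_eq_sum_card_fiberwise hmap, Finset.sum_product]
  refine Finset.sum_congr rfl (fun a ha => Finset.sum_congr rfl (fun b hb => ?_))
  rw [Finset.mem_filter] at ha hb
  rw [Nat.card_eq_card_toFinset]
  congr 1
  ext p
  simp only [Set.mem_toFinset, Set.mem_setOf_eq, Finset.mem_filter, Finset.mem_univ, true_and]
  constructor
  · rintro ⟨⟨h1, h2, h3⟩, hfp⟩
    simp only [Prod.mk.injEq] at hfp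
    refine ⟨?_, ?_, h3⟩
    · rw [← hfp.1]; exact (hR p.1).choose_spec.1.2
    · have hbconj : IsConj b p.2⁻¹ := by
        rw [← hfp.2]; exact (hR p.2⁻¹).choose_spec.1.2
      simpa using hinv hbconj
  · rintro ⟨h1, h2, h3⟩
    have hbconj : IsConj b p.2⁻¹ := by simpa using hinv h2
    have hfa' : (hR p.1).choose = a :=
      ((hR p.1).choose_spec.2 a ⟨ha.1, h1⟩).symm
    have hfb' : (hR p.2⁻¹).choose = b :=
      ((hR p.2⁻¹).choose_spec.2 b ⟨hb.1, hbconj⟩).symm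
    refine ⟨⟨hconj h1 ha.2, hconj hbconj hb.2, h3⟩, ?_⟩
    exact Prod.ext hfa' hfb'
end

section
/- Let G be a finite group, z ∈ G, and set e(z) := exp(C_G(z)), the exponent of the centralizer of z. Then for every integer m, the class functions γ_{m+e(z)}^z and γ_m^z on C_G(z) are equal, where γ_m^z(g) = |{x ∈ G | x^m = (gx)^m = z}|. -/
/-- Periodicity: γ_{m+e(z)}^z = γ_m^z where e(z) is the exponent of C_G(z). -/
theorem stmt8 {G : Type*} [Group G] [Fintype G] (z : G) (m : ℕ) (hm : 0 < m)
    (g : G) (hg : g ∈ Subgroup.centralizer ({z} : Set G)) :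
    Nat.card {x : G | x ^ (m + Monoid.exponent (Subgroup.centralizer ({z} : Set G))) = z ∧
        (g * x) ^ (m + Monoid.exponent (Subgroup.centralizer ({z} : Set G))) = z} =
      Nat.card {x : G | x ^ m = z ∧ (g * x) ^ m = z} := by
  set e := Monoid.exponent (Subgroup.centralizer ({z} : Set G)) with he
  have hx : ∀ (x : G) (k : ℕ), x ^ k = z → x ^ e = 1 := by
    intro x k hk
    have hxc : x ∈ Subgroup.centralizer ({z} : Set G) := by
      rw [Subgroup.mem_centralizer_iff]
      intro y hy
      rw [Set.mem_singleton_iff] at hy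
      subst hy
      rw [← hk, ← pow_succ, ← pow_succ']
    have h1 := Monoid.pow_exponent_eq_one (⟨x, hxc⟩ : Subgroup.centralizer ({z} : Set G))
    have := congrArg (Subtype.val) h1
    simpa using this
  have key : ∀ x : G, x ^ (m + e) = z ↔ x ^ m = z := by
    intro x
    constructor
    · intro h
      have h1 := hx x _ h
      rwa [pow_add, h1, mul_one] at h
    · intro h
      have h1 := hx x _ h
      rw [pow_add, h1, mul_one]
      exact h
  have hset : {x : G | x ^ (m + e) = z ∧ (g * x) ^ (m + e) = z} =
      {x : G | x ^ m = z ∧ (g * x) ^ m = z} := by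
    ext x
    simp only [Set.mem_setOf_eq, key x, key (g * x)]
  rw [hset]
end

section
/- Let G be a finite group, z ∈ G, m an integer, and a an integer coprime to the exponent of C_G(z). Then γ_{am}^{z^a} = γ_m^z as class functions on C_G(z) = C_G(z^a), where γ_m^z(g) = |{x ∈ G | x^m = (gx)^m = z}|. -/
/-- If gcd(a, exp(C_G(z))) = 1 then γ_{am}^{z^a} = γ_m^z as class functions on
C_G(z) = C_G(z^a). -/
theorem stmt9 {G : Type*} [Group G] [Fintype G] (z : G) (m a : ℕ) (hm : 0 < m) (ha : 0 < a)
    (hcop : a.Coprime (Monoid.exponent (Subgroup.centralizer ({z} : Set G))))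
    (g : G) (hg : g ∈ Subgroup.centralizer ({z} : Set G)) :
    Nat.card {x : G | x ^ (a * m) = z ^ a ∧ (g * x) ^ (a * m) = z ^ a} =
      Nat.card {x : G | x ^ m = z ∧ (g * x) ^ m = z} := by
  set H := Subgroup.centralizer ({z} : Set G) with hH
  have hz : z ∈ H := by
    rw [Subgroup.mem_centralizer_iff]
    intro y hy
    rw [Set.mem_singleton_iff] at hy
    subst hy; rfl
  have he : 0 < Monoid.exponent H := Monoid.ExponentExists.exponent_pos Monoid.ExponentExists.of_finite
  set e := Monoid.exponent H with hee
  haveI : NeZero e := ⟨he.ne'⟩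
  -- find b with a * b ≡ 1 [MOD e]
  obtain ⟨b, hb⟩ : ∃ b : ℕ, a * b ≡ 1 [MOD e] := by
    refine ⟨((a : ZMod e)⁻¹).val, ?_⟩
    have : ((a * ((a : ZMod e)⁻¹).val : ℕ) : ZMod e) = ((1 : ℕ) : ZMod e) := by
      push_cast
      rw [ZMod.natCast_val, ZMod.cast_id]
      exact ZMod.mul_inv_of_unit _ (ZMod.unitOfCoprime a hcop).isUnit
    exact (ZMod.natCast_eq_natCast_iff _ _ _).mp this
  have cancel : ∀ h : H, h ^ (a * b) = h := by
    intro h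
    have h1 : a * b ≡ 1 [MOD orderOf h] :=
      hb.of_dvd (Monoid.order_dvd_exponent h)
    calc h ^ (a * b) = h ^ 1 := pow_eq_pow_iff_modEq.mpr h1
    _ = h := pow_one h
  have main : ∀ h : H, h ^ (a * m) = (⟨z, hz⟩ : H) ^ a → h ^ m = ⟨z, hz⟩ := by
    intro h hh
    calc h ^ m = (h ^ m) ^ (a * b) := (cancel _).symm
    _ = (h ^ (a * m)) ^ b := by rw [← pow_mul, ← pow_mul]; ring_nf
    _ = ((⟨z, hz⟩ : H) ^ a) ^ b := by rw [hh]
    _ = ⟨z, hz⟩ := by rw [← pow_mul]; exact cancel _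
  have hset : {x : G | x ^ (a * m) = z ^ a ∧ (g * x) ^ (a * m) = z ^ a} =
      {x : G | x ^ m = z ∧ (g * x) ^ m = z} := by
    ext x
    simp only [Set.mem_setOf_eq]
    constructor
    · rintro ⟨hx1, hx2⟩
      have hzz : z ^ (a * b) = z := congrArg Subtype.val (cancel ⟨z, hz⟩)
      have hxH : x ∈ H := by
        rw [hH, Subgroup.mem_centralizer_iff]
        intro y hy
        rw [Set.mem_singleton_iff] at hy
        rw [hy]
        have hzx : z = x ^ (a * m * b) := by
          rw [pow_mul, hx1, ← pow_mul, hzz]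
        rw [hzx]
        exact ((Commute.refl x).pow_left _).eq
      have hgxH : g * x ∈ H := H.mul_mem hg hxH
      have e1 : (⟨x, hxH⟩ : H) ^ (a * m) = (⟨z, hz⟩ : H) ^ a := by
        ext; push_cast; exact hx1
      have e2 : (⟨g * x, hgxH⟩ : H) ^ (a * m) = (⟨z, hz⟩ : H) ^ a := by
        ext; push_cast; exact hx2
      constructor
      · have := congrArg Subtype.val (main _ e1)
        push_cast at this; exact this
      · have := congrArg Subtype.val (main _ e2)
        push_cast at this; exact this
    · rintro ⟨hx1, hx2⟩
      constructor
      · rw [mul_comm, pow_mul, hx1]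
      · rw [mul_comm, pow_mul, hx2]

  rw [hset]
end

section
/- Let G be a finite group, z ∈ G, m an integer with m | exp(C_G(z)) but m·o(z) ∤ exp(C_G(z)), where o(z) is the order of z. Then for every g ∈ C_G(z), the set {x ∈ G | x^m = (gx)^m = z} is empty. -/
/-- Any x with x^m = z gives a contradiction with the divisibility hypotheses. -/
lemma aux10 {G : Type*} [Group G] [Fintype G] (z : G) (m : ℕ) (hm : 0 < m)
    (hdvd : m ∣ Monoid.exponent (Subgroup.centralizer ({z} : Set G)))
    (hndvd : ¬ (m * orderOf z ∣ Monoid.exponent (Subgroup.centralizer ({z} : Set G))))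
    (x : G) (hx : x ^ m = z) : False := by
  have hxc : x ∈ Subgroup.centralizer ({z} : Set G) := by
    rw [Subgroup.mem_centralizer_iff]
    intro h hh
    simp only [Set.mem_singleton_iff] at hh
    subst hh
    rw [← hx]
    exact (Commute.self_pow x m).symm
  have hord : orderOf x ∣ Monoid.exponent (Subgroup.centralizer ({z} : Set G)) := by
    have := Monoid.order_dvd_exponent (⟨x, hxc⟩ : Subgroup.centralizer ({z} : Set G))
    rwa [Subgroup.orderOf_mk] at this
  have hoz : orderOf z = orderOf x / Nat.gcd (orderOf x) m := by
    rw [← hx, orderOf_pow]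
  apply hndvd
  have hkey : m * orderOf z = Nat.lcm m (orderOf x) := by
    rw [hoz, Nat.lcm, Nat.gcd_comm m (orderOf x),
      Nat.mul_div_assoc m (Nat.gcd_dvd_left (orderOf x) m)]
  rw [hkey]
  exact Nat.lcm_dvd hdvd hord

/-- If m | exp(C_G(z)) but m·o(z) ∤ exp(C_G(z)), then G_m(g,z) = ∅ for every
g ∈ C_G(z). -/
theorem stmt10 {G : Type*} [Group G] [Fintype G] (z : G) (m : ℕ) (hm : 0 < m)
    (hdvd : m ∣ Monoid.exponent (Subgroup.centralizer ({z} : Set G)))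
    (hndvd : ¬ (m * orderOf z ∣ Monoid.exponent (Subgroup.centralizer ({z} : Set G))))
    (g : G) (hg : g ∈ Subgroup.centralizer ({z} : Set G)) :
    {x : G | x ^ m = z ∧ (g * x) ^ m = z} = ∅ := by
  ext x
  simp only [Set.mem_setOf_eq, Set.mem_empty_iff_false, iff_false, not_and]
  intro h1 _
  exact aux10 z m hm hdvd hndvd x h1
end

section
/- Let G be a finite group, z ∈ G, and m an integer coprime to the exponent of C_G(z). Then for g ∈ C_G(z), |{x ∈ G | x^m = (gx)^m = z}| = 1 if g = 1 and 0 otherwise. -/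
open scoped Classical

/-- If gcd(m, exp(C_G(z))) = 1, then for g ∈ C_G(z) we have
|G_m(g,z)| = 1 if g = 1 and 0 otherwise. -/
theorem stmt11 {G : Type*} [Group G] [Fintype G] (z : G) (m : ℕ) (hm : 0 < m)
    (hcop : m.Coprime (Monoid.exponent (Subgroup.centralizer ({z} : Set G))))
    (g : G) (hg : g ∈ Subgroup.centralizer ({z} : Set G)) :
    Nat.card {x : G | x ^ m = z ∧ (g * x) ^ m = z} = if g = 1 then 1 else 0 := by
  set C := Subgroup.centralizer ({z} : Set G) with hC
  have hzC : z ∈ C := Subgroup.mem_centralizer_singleton_iff.mpr rfl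
  have hepos : 0 < Monoid.exponent C :=
    Monoid.ExponentExists.exponent_pos (Monoid.ExponentExists.of_finite)
  -- find a modular inverse of m
  obtain ⟨k, hk⟩ : ∃ k, (m * k) % Monoid.exponent C = 1 % Monoid.exponent C := by
    rcases Nat.lt_or_ge 1 (Monoid.exponent C) with h1 | h1
    · obtain ⟨k, -, hk⟩ := Nat.exists_mul_mod_eq_one_of_coprime hcop h1
      exact ⟨k, by rw [hk, Nat.mod_eq_of_lt h1]⟩
    · have h1' : Monoid.exponent C = 1 := le_antisymm h1 hepos
      exact ⟨1, by simp [h1', Nat.mod_one]⟩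
  have key : ∀ y : C, (y ^ m) ^ k = y := fun y => by
    rw [← pow_mul, Monoid.pow_eq_mod_exponent, hk, ← Monoid.pow_eq_mod_exponent, pow_one]
  have memC : ∀ x : G, x ^ m = z → x ∈ C := fun x hx => by
    rw [hC, Subgroup.mem_centralizer_singleton_iff, ← hx]
    exact ((Commute.refl x).pow_right m).eq
  have uniq : ∀ x y : G, x ^ m = z → y ^ m = z → x = y := by
    intro x y hx hy
    have hxC := memC x hx
    have hyC := memC y hy
    have hxy : ((⟨x, hxC⟩ : C) ^ m) = (⟨y, hyC⟩ : C) ^ m := by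
      ext
      simpa using hx.trans hy.symm
    have := (key ⟨x, hxC⟩).symm.trans (by rw [hxy, key])
    simpa [Subtype.ext_iff] using this
  set x₀ : C := (⟨z, hzC⟩ : C) ^ k with hx0
  have hx0m : (x₀ : G) ^ m = z := by
    have : (x₀ ^ m : C) = ⟨z, hzC⟩ := by
      rw [hx0, ← pow_mul, mul_comm, pow_mul]
      exact key _
    simpa [Subtype.ext_iff] using this
  by_cases hg1 : g = 1
  · subst hg1
    simp only [one_mul, and_self, if_true]
    rw [Nat.card_eq_one_iff_unique]
    exact ⟨⟨fun a b => Subtype.ext (uniq a b a.2 b.2)⟩, ⟨⟨(x₀ : G), hx0m⟩⟩⟩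
  · rw [if_neg hg1]
    have hempty : {x : G | x ^ m = z ∧ (g * x) ^ m = z} = ∅ := by
      ext x
      simp only [Set.mem_setOf_eq, Set.mem_empty_iff_false, iff_false, not_and]
      intro hx hgx
      have := uniq (g * x) x hgx hx
      exact hg1 (mul_eq_right.mp this)
    rw [hempty]
    simp
end

section
/- Let G be a finite group, z ∈ G, χ an irreducible character of C := C_G(z), and r an integer coprime to exp(G). Then |Σ_{x ∈ C, x^{m} = z^r} χ(x)| = σ_r(|Σ_{x ∈ C, x^m = z} χ(x)|), where σ_r is the Galois automorphism of ℚ(ζ_{exp G}) sending roots of unity to their r-th powers (noting that the absolute values lie in the real subfield, on which σ_r acts). -/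
open scoped Classical
open CategoryTheory


noncomputable section

namespace Stmt16Aux

variable {H : Type} [Group H]

lemma char_pow_formula (W : FDRep ℂ H) (n : ℕ) (hn : 0 < n) (g : H) (hg : g ^ n = 1) :
    ∃ d : ℕ → ℕ, ∀ s : ℕ, W.character (g ^ s) =
      ∑ j ∈ Finset.range n, (d j : ℂ) * (Complex.exp (2 * Real.pi * Complex.I / n) ^ j) ^ s := by
  set ζ : ℂ := Complex.exp (2 * Real.pi * Complex.I / n) with hζdef
  have hζ : IsPrimitiveRoot ζ n := Complex.isPrimitiveRoot_exp n hn.ne'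
  have hζn : ζ ^ n = 1 := hζ.pow_eq_one
  have hζ0 : ζ ≠ 0 := Complex.exp_ne_zero _
  set A : Module.End ℂ W := W.ρ g with hAdef
  have hA : A ^ n = 1 := by rw [hAdef, ← map_pow, hg, map_one]
  set Q : ℕ → Module.End ℂ W :=
    fun j => ∑ k ∈ Finset.range n, ((ζ ^ j)⁻¹) ^ k • A ^ k with hQdef
  have hμn : ∀ j : ℕ, ((ζ ^ j)⁻¹) ^ n = 1 := by
    intro j
    rw [← inv_pow, ← pow_mul, mul_comm, pow_mul, inv_pow, hζn, inv_one, one_pow]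
  -- A * Q j = ζ^j • Q j
  have hAQ : ∀ j, A * Q j = ζ ^ j • Q j := by
    intro j
    set μ : ℂ := (ζ ^ j)⁻¹ with hμdef
    have hμζ : ζ ^ j * μ = 1 := mul_inv_cancel₀ (pow_ne_zero _ hζ0)
    have key : μ • (A * Q j) = Q j := by
      have h1 : μ • (A * Q j) = ∑ k ∈ Finset.range n, μ ^ (k + 1) • A ^ (k + 1) := by
        rw [hQdef]
        rw [Finset.mul_sum, Finset.smul_sum]
        refine Finset.sum_congr rfl fun k _ => ?_
        rw [mul_smul_comm, smul_smul, ← pow_succ', ← pow_succ']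
      have h2 : ∀ k, μ ^ k • A ^ k = (fun k => μ ^ k • A ^ k) k := fun _ => rfl
      have hshift : ∑ k ∈ Finset.range n, μ ^ (k + 1) • A ^ (k + 1)
          = ∑ k ∈ Finset.range n, μ ^ k • A ^ k := by
        have e1 := Finset.sum_range_succ' (fun k => μ ^ k • A ^ k) n
        have e2 := Finset.sum_range_succ (fun k => μ ^ k • A ^ k) n
        have hend : μ ^ n • A ^ n = μ ^ 0 • A ^ 0 := by
          rw [hA, pow_zero, pow_zero, one_smul, hμdef, hμn j, one_smul]
        rw [e2] at e1
        -- e1 : ∑ range n, f k + f n = ∑ range n, f (k+1) + f 0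
        have := e1.symm
        rw [hend] at this
        exact add_right_cancel this
      rw [h1, hshift, hQdef]
    calc A * Q j = (ζ ^ j * μ) • (A * Q j) := by rw [hμζ, one_smul]
      _ = ζ ^ j • (μ • (A * Q j)) := by rw [mul_smul]
      _ = ζ ^ j • Q j := by rw [key]
  have hAsQ : ∀ j s, A ^ s * Q j = ((ζ ^ j) ^ s) • Q j := by
    intro j s
    induction s with
    | zero => simp
    | succ s ih =>
        rw [pow_succ, mul_assoc, hAQ, mul_smul_comm, ih, smul_smul, ← pow_succ']
  have hn0 : (n : ℂ) ≠ 0 := Nat.cast_ne_zero.mpr hn.ne'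
  have hQQ : ∀ j, Q j * Q j = (n : ℂ) • Q j := by
    intro j
    have h1 : Q j * Q j = ∑ k ∈ Finset.range n, ((ζ ^ j)⁻¹) ^ k • (A ^ k * Q j) := by
      conv_lhs => rw [hQdef]
      rw [Finset.sum_mul]
      exact Finset.sum_congr rfl fun k _ => smul_mul_assoc _ _ _
    rw [h1]
    have h2 : ∀ k ∈ Finset.range n, ((ζ ^ j)⁻¹) ^ k • (A ^ k * Q j) = Q j := by
      intro k _
      rw [hAsQ, smul_smul, ← mul_pow, inv_mul_cancel₀ (pow_ne_zero _ hζ0), one_pow, one_smul]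
    rw [Finset.sum_congr rfl h2, Finset.sum_const, Finset.card_range]
    simp [Algebra.smul_def]
  have hsumQ : ∑ j ∈ Finset.range n, Q j = (n : ℂ) • 1 := by
    simp only [hQdef]
    rw [Finset.sum_comm]
    have hterm : ∀ k j : ℕ, ((ζ ^ j)⁻¹) ^ k = ((ζ ^ k)⁻¹) ^ j := by
      intro k j
      rw [← inv_pow, ← inv_pow, ← pow_mul, ← pow_mul, mul_comm]
    calc ∑ k ∈ Finset.range n, ∑ j ∈ Finset.range n, ((ζ ^ j)⁻¹) ^ k • A ^ k
        = ∑ k ∈ Finset.range n, (∑ j ∈ Finset.range n, ((ζ ^ k)⁻¹) ^ j) • A ^ k := by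
          refine Finset.sum_congr rfl fun k _ => ?_
          rw [Finset.sum_smul]
          exact Finset.sum_congr rfl fun j _ => by rw [hterm]
      _ = ∑ k ∈ Finset.range n, (if k = 0 then (n : ℂ) else 0) • A ^ k := by
          refine Finset.sum_congr rfl fun k hk => ?_
          congr 1
          by_cases h0 : k = 0
          · simp [h0]
          · rw [if_neg h0]
            have hne : (ζ ^ k)⁻¹ ≠ 1 := by
              rw [ne_eq, inv_eq_one]
              exact hζ.pow_ne_one_of_pos_of_lt h0
                (Finset.mem_range.mp hk)
            rw [geom_sum_eq hne, hμn k, sub_self, zero_div]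
      _ = (n : ℂ) • 1 := by
          rw [Finset.sum_eq_single 0]
          · simp
          · intro k _ hk0; simp [hk0]
          · intro h; exact absurd (Finset.mem_range.mpr hn) h
  set P : ℕ → Module.End ℂ W := fun j => (n : ℂ)⁻¹ • Q j with hPdef
  have hPdef' : ∀ j, P j = (n : ℂ)⁻¹ • Q j := fun _ => rfl
  have hPidem : ∀ j, P j * P j = P j := by
    intro j
    rw [hPdef', smul_mul_assoc, mul_smul_comm, hQQ, smul_smul, smul_smul]
    congr 1
    field_simp
  set d : ℕ → ℕ := fun j => Module.finrank ℂ (LinearMap.range (P j)) with hddef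
  have htrP : ∀ j, LinearMap.trace ℂ W (P j) = (d j : ℂ) := by
    intro j
    have hproj : LinearMap.IsProj (LinearMap.range (P j)) (P j) := by
      refine ⟨fun x => LinearMap.mem_range_self _ x, ?_⟩
      rintro x ⟨y, rfl⟩
      simpa [Module.End.mul_apply] using
        congrArg (fun f : Module.End ℂ W => f y) (hPidem j)
    exact hproj.trace
  have hsumP : ∑ j ∈ Finset.range n, P j = 1 := by
    simp only [hPdef]
    rw [← Finset.smul_sum, hsumQ, smul_smul, inv_mul_cancel₀ hn0, one_smul]
  refine ⟨d, fun s => ?_⟩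
  have hchar : W.character (g ^ s) = LinearMap.trace ℂ W (A ^ s) := by
    simp only [FDRep.character, map_pow, hAdef]
  rw [hchar]
  have hAs : A ^ s = ∑ j ∈ Finset.range n, ((ζ ^ j) ^ s) • P j := by
    calc A ^ s = A ^ s * ∑ j ∈ Finset.range n, P j := by rw [hsumP, mul_one]
      _ = ∑ j ∈ Finset.range n, A ^ s * P j := by rw [Finset.mul_sum]
      _ = ∑ j ∈ Finset.range n, ((ζ ^ j) ^ s) • P j := by
          refine Finset.sum_congr rfl fun j _ => ?_
          rw [hPdef', mul_smul_comm, hAsQ, smul_comm ((n : ℂ)⁻¹)]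
  rw [hAs, map_sum]
  refine Finset.sum_congr rfl fun j _ => ?_
  rw [map_smul, htrP, smul_eq_mul, mul_comm]


lemma char_ringHom (W : FDRep ℂ H) (n t : ℕ) (hn : 0 < n) (g : H) (hg : g ^ n = 1)
    (τ : ℂ →+* ℂ) (hτ : ∀ ζ : ℂ, ζ ^ n = 1 → τ ζ = ζ ^ t) :
    τ (W.character g) = W.character (g ^ t) := by
  obtain ⟨d, hd⟩ := char_pow_formula W n hn g hg
  have hζn : Complex.exp (2 * Real.pi * Complex.I / n) ^ n = 1 :=
    (Complex.isPrimitiveRoot_exp n hn.ne').pow_eq_one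
  have h1 := hd 1
  rw [pow_one] at h1
  rw [h1, map_sum, hd t]
  refine Finset.sum_congr rfl fun j _ => ?_
  rw [map_mul, map_natCast]
  congr 1
  rw [pow_one]
  refine hτ _ ?_
  rw [← pow_mul, mul_comm j n, pow_mul, hζn, one_pow]

lemma conj_root (n : ℕ) (hn : 0 < n) (ζ : ℂ) (h : ζ ^ n = 1) :
    (starRingEnd ℂ) ζ = ζ ^ (n - 1) := by
  have habs : ‖ζ‖ = 1 := by
    exact Complex.norm_eq_one_of_pow_eq_one h hn.ne'
  have hinv : ζ⁻¹ = (starRingEnd ℂ) ζ := Complex.inv_eq_conj habs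
  rw [← hinv]
  refine inv_eq_of_mul_eq_one_left ?_
  rw [← pow_succ, Nat.sub_add_cancel hn, h]

end Stmt16Aux

end


/-- |Σ_{x ∈ C, x^m = z^r} χ(x)| = σ_r(|Σ_{x ∈ C, x^m = z} χ(x)|) for r coprime to
exp(G), stated (equivalently) for the squared absolute values, which lie in the
real subfield of ℚ(ζ_{exp G}): here |S|² = S ⋅ conj(S), C = C_G(z) = C_G(z^r),
χ is an irreducible character of C, and σ_r is any field embedding ℂ → ℂ sending
each exp(G)-th root of unity to its r-th power. -/
theorem stmt16 {G : Type} [Group G] [Fintype G] (z : G) (m : ℕ) (hm : 0 < m)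
    (r : ℕ) (hr : r.Coprime (Monoid.exponent G))
    (V : FDRep ℂ ↥(Subgroup.centralizer ({z} : Set G))) (hV : Simple V)
    (σ : ℂ →+* ℂ) (hσ : ∀ ζ : ℂ, ζ ^ Monoid.exponent G = 1 → σ ζ = ζ ^ r) :
    (∑ x : Subgroup.centralizer ({z} : Set G),
          if (x : G) ^ m = z ^ r then V.character x else 0) *
        starRingEnd ℂ (∑ x : Subgroup.centralizer ({z} : Set G),
          if (x : G) ^ m = z ^ r then V.character x else 0) =
      σ ((∑ x : Subgroup.centralizer ({z} : Set G),
            if (x : G) ^ m = z then V.character x else 0) *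
          starRingEnd ℂ (∑ x : Subgroup.centralizer ({z} : Set G),
            if (x : G) ^ m = z then V.character x else 0)) := by
  set n := Monoid.exponent G with hndef
  have hn : 0 < n := Nat.pos_of_ne_zero Monoid.exponent_ne_zero_of_finite
  haveI : NeZero n := ⟨hn.ne'⟩
  have hg1 : ∀ x : (Subgroup.centralizer ({z} : Set G)), x ^ n = 1 := fun x => by
    ext
    push_cast
    exact Monoid.pow_exponent_eq_one (x : G)
  have hσx : ∀ x : (Subgroup.centralizer ({z} : Set G)), σ (V.character x) = V.character (x ^ r) := fun x =>
    Stmt16Aux.char_ringHom V n r hn x (hg1 x) σ hσ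
  have hcx : ∀ x : (Subgroup.centralizer ({z} : Set G)), (starRingEnd ℂ) (V.character x) = V.character (x ^ (n - 1)) := fun x =>
    Stmt16Aux.char_ringHom V n (n - 1) hn x (hg1 x) (starRingEnd ℂ)
      (fun ζ h => Stmt16Aux.conj_root n hn ζ h)
  -- inverse of r mod n
  set u : (ZMod n)ˣ := ZMod.unitOfCoprime r hr with hudef
  set r' : ℕ := ZMod.val ((u⁻¹ : (ZMod n)ˣ) : ZMod n) with hr'def
  have hmod : ((r * r' : ℕ) : ZMod n) = ((1 : ℕ) : ZMod n) := by
    push_cast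
    rw [hr'def, ZMod.natCast_val, ZMod.cast_id]
    calc (r : ZMod n) * ((u⁻¹ : (ZMod n)ˣ) : ZMod n)
        = (u : ZMod n) * ((u⁻¹ : (ZMod n)ˣ) : ZMod n) := by
          rw [hudef, ZMod.coe_unitOfCoprime]
      _ = ((u * u⁻¹ : (ZMod n)ˣ) : ZMod n) := by rw [Units.val_mul]
      _ = 1 := by rw [mul_inv_cancel, Units.val_one]
  have hrr' : ∀ g : G, g ^ (r * r') = g := by
    intro g
    have h1 : r * r' ≡ 1 [MOD n] := (ZMod.natCast_eq_natCast_iff _ _ _).mp hmod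
    have h2 : r * r' ≡ 1 [MOD orderOf g] :=
      Nat.ModEq.of_dvd (Monoid.order_dvd_exponent g) h1
    calc g ^ (r * r') = g ^ 1 := pow_eq_pow_iff_modEq.mpr h2
      _ = g := pow_one g
  have hrr'CC : ∀ x : (Subgroup.centralizer ({z} : Set G)), x ^ (r * r') = x := fun x => by
    ext; push_cast; exact hrr' (x : G)
  have hbij : Function.Bijective (fun x : (Subgroup.centralizer ({z} : Set G)) => x ^ r) := by
    constructor
    · intro a b hab
      simp only at hab
      have h3 : (a ^ r) ^ r' = (b ^ r) ^ r' := by rw [hab]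
      rwa [← pow_mul, ← pow_mul, hrr'CC, hrr'CC] at h3
    · intro y
      refine ⟨y ^ r', ?_⟩
      show (y ^ r') ^ r = y
      rw [← pow_mul, mul_comm r' r, hrr'CC]
  have hcond : ∀ x : (Subgroup.centralizer ({z} : Set G)), (((x : G)) ^ m = z) ↔ (((x ^ r : (Subgroup.centralizer ({z} : Set G))) : G) ^ m = z ^ r) := by
    intro x
    have hx : ((x ^ r : (Subgroup.centralizer ({z} : Set G))) : G) = (x : G) ^ r := by push_cast; rfl
    rw [hx, ← pow_mul, mul_comm r m, pow_mul]
    constructor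
    · intro h; rw [h]
    · intro h
      have h2 : ((x : G) ^ m) ^ (r * r') = z ^ (r * r') := by
        rw [pow_mul, pow_mul, h]
      rwa [hrr', hrr'] at h2
  have key1 : σ (∑ x : (Subgroup.centralizer ({z} : Set G)), if ((x : G)) ^ m = z then V.character x else 0)
      = ∑ x : (Subgroup.centralizer ({z} : Set G)), if ((x : G)) ^ m = z ^ r then V.character x else 0 := by
    rw [map_sum]
    refine Fintype.sum_bijective _ hbij _ _ fun x => ?_
    rw [apply_ite σ, map_zero, hσx]
    exact if_congr (hcond x) rfl rfl
  have key2 : σ ((starRingEnd ℂ) (∑ x : (Subgroup.centralizer ({z} : Set G)), if ((x : G)) ^ m = z then V.character x else 0))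
      = (starRingEnd ℂ) (∑ x : (Subgroup.centralizer ({z} : Set G)), if ((x : G)) ^ m = z ^ r then V.character x else 0) := by
    rw [map_sum, map_sum, map_sum]
    refine Fintype.sum_bijective _ hbij _ _ fun x => ?_
    rw [apply_ite (starRingEnd ℂ), map_zero, apply_ite σ, map_zero,
      apply_ite (starRingEnd ℂ), map_zero]
    refine if_congr (hcond x) ?_ rfl
    rw [hcx x, hσx (x ^ (n - 1)), ← pow_mul, mul_comm, pow_mul, ← hcx (x ^ r)]
  rw [map_mul, key1, key2]
end

section
/- Let G be a finite group with a central element y, q a power of a prime p, χ an irreducible character of G, and write y = y_p · y_{p'} with y_p the p-part and y_{p'} the p'-part of y. Then |Σ_{x ∈ G, x^q = y} χ(x)| = |Σ_{x ∈ G, x^q = y_p} χ(x)|. More precisely, Σ_{x^q=y} χ(x) = (χ(a)/χ(e)) · Σ_{b^q=y_p} χ(b) for a suitable central element a with χ(a)/χ(e) a root of unity. -/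
open scoped Classical
open CategoryTheory

theorem central_scalar {G : Type} [Group G] (V : FDRep ℂ G) (hV : Simple V) (c : G)
    (hc : c ∈ Subgroup.center G) :
    ∃ μ : ℂ, V.ρ c = μ • (LinearMap.id : V →ₗ[ℂ] V) := by
  haveI := hV
  have hcomm : ∀ g : G, (V.ρ c).comp (V.ρ g) = (V.ρ g).comp (V.ρ c) := by
    intro g
    rw [← Module.End.mul_eq_comp, ← Module.End.mul_eq_comp, ← map_mul, ← map_mul,
      (Subgroup.mem_center_iff.mp hc g)]
  let f : V ⟶ V := { hom := FGModuleCat.ofHom (V.ρ c), comm := fun g => by ext v; exact LinearMap.congr_fun (hcomm g) v }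
  obtain ⟨μ, hμ⟩ := CategoryTheory.endomorphism_simple_eq_smul_id (𝕜 := ℂ) f
  refine ⟨μ, ?_⟩
  have := congrArg (fun φ : V ⟶ V => φ.hom.hom.hom) hμ
  exact this.symm

theorem fdrep_nontrivial {G : Type} [Group G] (V : FDRep ℂ G) (hV : Simple V) :
    Nontrivial V := by
  haveI := hV
  by_contra h
  rw [not_nontrivial_iff_subsingleton] at h
  apply CategoryTheory.id_nonzero V
  apply Action.hom_ext
  apply FGModuleCat.hom_ext
  apply LinearMap.ext
  intro v
  exact @Subsingleton.elim _ h _ _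

theorem central_char {G : Type} [Group G] [Fintype G] (V : FDRep ℂ G) (hV : Simple V) (c : G)
    (hc : c ∈ Subgroup.center G) :
    ∃ μ : ℂ, (∀ x : G, V.character (c * x) = μ * V.character x) ∧
      μ ^ orderOf c = 1 ∧ V.character c / V.character 1 = μ ∧ ‖μ‖ = 1 := by
  haveI := fdrep_nontrivial V hV
  obtain ⟨μ, hμ⟩ := central_scalar V hV c hc
  have hmul : ∀ x : G, V.character (c * x) = μ * V.character x := by
    intro x
    show LinearMap.trace ℂ V (V.ρ (c * x)) = μ * LinearMap.trace ℂ V (V.ρ x)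
    rw [map_mul, hμ, smul_mul_assoc, Module.End.mul_eq_comp, LinearMap.id_comp, map_smul,
      smul_eq_mul]
  have hord : μ ^ orderOf c = 1 := by
    have h1 : (V.ρ c) ^ orderOf c = 1 := by rw [← map_pow, pow_orderOf_eq_one, map_one]
    rw [hμ, smul_pow, Module.End.id_pow] at h1
    obtain ⟨v, hv⟩ := exists_ne (0 : V)
    have := congrArg (fun (f : V →ₗ[ℂ] V) => f v) h1
    simp only [LinearMap.smul_apply, Module.End.one_apply, LinearMap.id_apply] at this
    have h2 : (μ ^ orderOf c - 1) • v = 0 := by rw [sub_smul, one_smul, this, sub_self]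
    rcases smul_eq_zero.mp h2 with h | h
    · exact sub_eq_zero.mp h
    · exact absurd h hv
  have hone : V.character 1 ≠ 0 := by
    rw [FDRep.char_one]
    exact_mod_cast Nat.cast_ne_zero.mpr (Module.finrank_pos (R := ℂ) (M := V)).ne'
  have hc1 : V.character c = μ * V.character 1 := by
    have := hmul 1; rwa [mul_one] at this
  refine ⟨μ, hmul, hord, by rw [hc1, mul_div_assoc, div_self hone, mul_one], ?_⟩
  have h4 := Complex.norm_eq_one_of_pow_eq_one hord (orderOf_pos c).ne'
  exact h4


/-- For y central, q = p^k, χ irreducible: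
|Σ_{x^q=y} χ(x)| = |Σ_{x^q=y_p} χ(x)|, and in fact
Σ_{x^q=y} χ(x) = (χ(a)/χ(e)) Σ_{b^q=y_p} χ(b) for a suitable central element a,
where χ(a)/χ(e) is a root of unity.  Here y = y_p ⋅ y_{p'} is the decomposition
of y into its commuting p-part and p'-part. -/
theorem stmt17 {G : Type} [Group G] [Fintype G] (p k : ℕ) (hp : p.Prime)
    (q : ℕ) (hq : q = p ^ k)
    (y yp yp' : G) (hy : y ∈ Subgroup.center G)
    (hdec : y = yp * yp') (hcomm : Commute yp yp')
    (hyp : ∃ j : ℕ, orderOf yp = p ^ j) (hyp' : ¬ p ∣ orderOf yp')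
    (V : FDRep ℂ G) (hV : Simple V) :
    ‖∑ x : G, if x ^ q = y then V.character x else 0‖ =
        ‖∑ x : G, if x ^ q = yp then V.character x else 0‖ ∧
      ∃ a : G, a ∈ Subgroup.center G ∧
        (∃ j : ℕ, 0 < j ∧ (V.character a / V.character 1) ^ j = 1) ∧
        (∑ x : G, if x ^ q = y then V.character x else 0) =
          (V.character a / V.character 1) *
            ∑ b : G, if b ^ q = yp then V.character b else 0 := by
  obtain ⟨j0, hj0⟩ := hyp
  set m := orderOf yp' with hm
  have hpm : Nat.Coprime p m := hp.coprime_iff_not_dvd.mpr hyp'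
  have hcop : Nat.Coprime (p ^ j0) m := Nat.Coprime.pow_left _ hpm
  -- yp' is central
  obtain ⟨s, hs0, hs1⟩ := Nat.chineseRemainder hcop 0 1
  have hyps : yp ^ s = 1 := by
    apply orderOf_dvd_iff_pow_eq_one.mp
    rw [hj0]
    exact (Nat.modEq_zero_iff_dvd.mp hs0)
  have hyp's : yp' ^ s = yp' := by
    have : yp' ^ s = yp' ^ 1 := pow_eq_pow_iff_modEq.mpr hs1
    simpa using this
  have hys : y ^ s = yp' := by
    rw [hdec, hcomm.mul_pow, hyps, hyp's, one_mul]
  have hyp'c : yp' ∈ Subgroup.center G := hys ▸ pow_mem hy s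
  have hypc : yp ∈ Subgroup.center G := by
    have : yp = y * yp'⁻¹ := by rw [hdec, mul_inv_cancel_right]
    rw [this]
    exact mul_mem hy (inv_mem hyp'c)
  -- find r with q * r ≡ 1 [MOD m]
  have hqm : Nat.Coprime q m := by rw [hq]; exact Nat.Coprime.pow_left _ hpm
  obtain ⟨r, hr⟩ : ∃ r, q * r ≡ 1 [MOD m] := by
    rcases eq_or_lt_of_le (orderOf_pos yp' : 0 < m).nat_succ_le with h1 | h1
    · refine ⟨0, ?_⟩
      have hm1 : m = 1 := h1.symm
      rw [hm1]
      exact Nat.modEq_one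
    · obtain ⟨r, -, hr⟩ := Nat.exists_mul_mod_eq_one_of_coprime hqm h1
      exact ⟨r, by unfold Nat.ModEq; rw [hr, Nat.mod_eq_of_lt h1]⟩
  set c := yp' ^ r with hcdef
  have hc_cent : c ∈ Subgroup.center G := pow_mem hyp'c r
  have hcq : c ^ q = yp' := by
    rw [hcdef, ← pow_mul]
    have : yp' ^ (r * q) = yp' ^ 1 := by
      apply pow_eq_pow_iff_modEq.mpr
      rw [mul_comm]; exact hr
    simpa using this
  obtain ⟨μ, hmul, hord, hdiv, habs⟩ := central_char V hV c hc_cent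
  -- the key identity
  have key : (∑ x : G, if x ^ q = y then V.character x else 0) =
      μ * ∑ b : G, if b ^ q = yp then V.character b else 0 := by
    have step1 : (∑ b : G, if (c * b) ^ q = y then V.character (c * b) else 0) =
        (∑ x : G, if x ^ q = y then V.character x else 0) :=
      Fintype.sum_equiv (Equiv.mulLeft c)
        (fun b => if (c * b) ^ q = y then V.character (c * b) else 0)
        (fun x => if x ^ q = y then V.character x else 0) (fun b => rfl)
    rw [← step1, Finset.mul_sum]
    apply Finset.sum_congr rfl
    intro b _
    have hcb : Commute c b := (Subgroup.mem_center_iff.mp hc_cent b).symm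
    have hcond : (c * b) ^ q = y ↔ b ^ q = yp := by
      rw [hcb.mul_pow, hcq, hdec, hcomm.eq]
      exact mul_right_inj yp'
    by_cases h : b ^ q = yp
    · rw [if_pos (hcond.mpr h), if_pos h, hmul b]
    · rw [if_neg (fun hh => h (hcond.mp hh)), if_neg h, mul_zero]
  constructor
  · rw [key, norm_mul, habs, one_mul]
  · exact ⟨c, hc_cent, ⟨orderOf c, orderOf_pos c, by rw [hdiv]; exact hord⟩,
      by rw [hdiv]; exact key⟩
end
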